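/- Let H be a graph with fractional edge-cover number ρ(H) and let G be a graph with m edges. Then the number of subgraphs of G isomorphic to H is at most (2m)^{ρ(H)}. -/

import Mathlib

/-!
Mapping each copy of `H` in `G` back along an isomorphism injects the copies into the
homomorphisms `H →g G`, so it suffices to bound those. For a fractional edge cover `ψ`, the number
of homomorphisms is `∑_f ∏_e 1[f(e) ∈ E(G)] ^ ψ e`, summed over all maps `f : V → W`. Finner's
inequality, i.e. Hölder's inequality applied one vertex at a time (at a vertex `v` the exponents
of the edges through `v` add up to at least `1`), bounds this by `∏_e N_e ^ ψ e`, where `N_e ≤ 2m`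
counts the maps of the two ends of `e` onto an edge of `G`. Finally take the infimum over `ψ`.
-/

noncomputable def fracEdgeCoverNum {V : Type*} [Fintype V] [DecidableEq V]
    (H : SimpleGraph V) : ℝ :=
  sInf {x : ℝ | ∃ ψ : Sym2 V → ℝ, (∀ e, 0 ≤ ψ e ∧ ψ e ≤ 1) ∧
    (∀ e, e ∉ H.edgeSet → ψ e = 0) ∧
    (∀ v : V, 1 ≤ ∑ e : Sym2 V, if v ∈ e then ψ e else 0) ∧
    x = ∑ e : Sym2 V, ψ e}

open Finset Function Real

section Holder
variable {α ι : Type*} [Fintype α]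

theorem sum_prod_rpow_le_one (t : Finset ι) {ψ : ι → ℝ} {u : ι → α → ℝ}
    (hψ : ∀ e ∈ t, 0 ≤ ψ e) (hψt : 1 ≤ ∑ e ∈ t, ψ e)
    (hu : ∀ e ∈ t, ∀ x, 0 ≤ u e x) (hu1 : ∀ e ∈ t, ∑ x, u e x ≤ 1) :
    ∑ x, ∏ e ∈ t, u e x ^ ψ e ≤ 1 := by
  set S := ∑ e ∈ t, ψ e
  have hS : 0 < S := one_pos.trans_le hψt
  have hw : ∀ e ∈ t, 0 ≤ ψ e / S := fun e he => div_nonneg (hψ e he) hS.le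
  have hw1 : ∑ e ∈ t, ψ e / S = 1 := by rw [← sum_div, div_self hS.ne']
  -- as `u e x ≤ 1`, lowering the exponents to the weights `ψ e / S` of AM-GM can only help
  have hlower : ∀ x, ∏ e ∈ t, u e x ^ ψ e ≤ ∏ e ∈ t, u e x ^ (ψ e / S) := fun x =>
    prod_le_prod (fun e he => rpow_nonneg (hu e he x) _) fun e he =>
      rpow_le_rpow_of_exponent_ge' (hu e he x)
        ((single_le_sum (fun y _ => hu e he y) (mem_univ x)).trans (hu1 e he))
        (hw e he) (div_le_self (hψ e he) hψt)
  calc ∑ x, ∏ e ∈ t, u e x ^ ψ e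
      ≤ ∑ x, ∑ e ∈ t, ψ e / S * u e x := sum_le_sum fun x _ => (hlower x).trans <|
        geom_mean_le_arith_mean_weighted t _ _ hw hw1 fun e he => hu e he x
    _ = ∑ e ∈ t, ψ e / S * ∑ x, u e x := by rw [sum_comm]; simp_rw [mul_sum]
    _ ≤ ∑ e ∈ t, ψ e / S := sum_le_sum fun e he => mul_le_of_le_one_right (hw e he) (hu1 e he)
    _ = 1 := hw1

theorem sum_prod_rpow_le_prod_sum_rpow (t : Finset ι) {ψ : ι → ℝ} {h : ι → α → ℝ}
    (hψ : ∀ e ∈ t, 0 ≤ ψ e) (hψt : 1 ≤ ∑ e ∈ t, ψ e) (hh : ∀ e ∈ t, ∀ x, 0 ≤ h e x) :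
    ∑ x, ∏ e ∈ t, h e x ^ ψ e ≤ ∏ e ∈ t, (∑ x, h e x) ^ ψ e := by
  set T : ι → ℝ := fun e => ∑ x, h e x
  have hT : ∀ e ∈ t, 0 ≤ T e := fun e he => sum_nonneg fun x _ => hh e he x
  have hu : ∀ e ∈ t, ∀ x, 0 ≤ h e x / T e := fun e he x => div_nonneg (hh e he x) (hT e he)
  have hsplit : ∀ x,
      ∏ e ∈ t, h e x ^ ψ e = (∏ e ∈ t, T e ^ ψ e) * ∏ e ∈ t, (h e x / T e) ^ ψ e := by
    intro x
    rw [← prod_mul_distrib]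
    refine prod_congr rfl fun e he => ?_
    rw [← mul_rpow (hT e he) (hu e he x), mul_div_cancel_of_imp' fun hTe =>
      (sum_eq_zero_iff_of_nonneg fun y _ => hh e he y).mp hTe x (mem_univ x)]
  calc ∑ x, ∏ e ∈ t, h e x ^ ψ e
      = (∏ e ∈ t, T e ^ ψ e) * ∑ x, ∏ e ∈ t, (h e x / T e) ^ ψ e := by
        simp_rw [hsplit, mul_sum]
    _ ≤ (∏ e ∈ t, T e ^ ψ e) * 1 := by
        gcongr
        · exact prod_nonneg fun e he => rpow_nonneg (hT e he) _
        · exact sum_prod_rpow_le_one t hψ hψt hu fun e _ => by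
            rw [← sum_div]; exact div_self_le_one _
    _ = ∏ e ∈ t, T e ^ ψ e := mul_one _

end Holder

section Finner
variable {ι X : Type*} [DecidableEq ι] [Fintype X]

theorem sum_update_prod_rpow_le {E : Type*} [Fintype E] {A : E → Finset ι} {ψ : E → ℝ}
    (hψ : ∀ e, 0 ≤ ψ e) {g : E → (ι → X) → ℝ} (hg : ∀ e f, 0 ≤ g e f)
    (hdep : ∀ e, DependsOn (g e) (A e : Set ι)) {v : ι}
    (hv : 1 ≤ ∑ e with v ∈ A e, ψ e) (f : ι → X) :
    ∑ x, ∏ e, g e (update f v x) ^ ψ e ≤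
      ∏ e, (if v ∈ A e then ∑ x, g e (update f v x) else g e f) ^ ψ e := by
  have hoff : ∀ e, v ∉ A e → ∀ x, g e (update f v x) = g e f := fun e he x =>
    hdep e fun i hi => update_of_ne (by rintro rfl; exact he hi) ..
  simp_rw [← prod_filter_mul_prod_filter_not univ (fun e => v ∈ A e)]
  calc ∑ x, (∏ e with v ∈ A e, g e (update f v x) ^ ψ e) *
          ∏ e with v ∉ A e, g e (update f v x) ^ ψ e
      = (∑ x, ∏ e with v ∈ A e, g e (update f v x) ^ ψ e) *
          ∏ e with v ∉ A e, g e f ^ ψ e := by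
        rw [sum_mul]
        refine sum_congr rfl fun x _ => congrArg _ (prod_congr rfl fun e he => ?_)
        rw [hoff e (mem_filter.mp he).2]
    _ ≤ (∏ e with v ∈ A e, (∑ x, g e (update f v x)) ^ ψ e) *
          ∏ e with v ∉ A e, g e f ^ ψ e := by
        gcongr
        · exact prod_nonneg fun e _ => rpow_nonneg (hg e f) _
        · exact sum_prod_rpow_le_prod_sum_rpow _ (fun e _ => hψ e) hv fun e _ x => hg e _
    _ = _ := by
        congr 1 <;> refine prod_congr rfl fun e he => ?_ <;> simp_all

variable [Fintype ι] [DecidableEq X]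

def agreeOutside (d : ι → X) (s : Finset ι) : Finset (ι → X) :=
  {f | ∀ i ∉ s, f i = d i}

@[simp] theorem mem_agreeOutside {d f : ι → X} {s : Finset ι} :
    f ∈ agreeOutside d s ↔ ∀ i ∉ s, f i = d i := by
  simp [agreeOutside]

@[simp] theorem agreeOutside_empty (d : ι → X) : agreeOutside d ∅ = {d} := by
  ext f; simp [funext_iff]

@[simp] theorem agreeOutside_univ (d : ι → X) : agreeOutside d univ = univ := by
  ext f; simp

theorem sum_agreeOutside_insert {d : ι → X} {s : Finset ι} {v : ι} (hv : v ∉ s)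
    (F : (ι → X) → ℝ) :
    ∑ f ∈ agreeOutside d (insert v s), F f = ∑ f ∈ agreeOutside d s, ∑ x, F (update f v x) := by
  rw [← sum_product' (f := fun f x => F (update f v x))]
  refine sum_nbij' (fun f => (update f v (d v), f v)) (fun p => update p.1 v p.2) ?_ ?_ ?_ ?_ ?_
  · intro f hf
    simp only [mem_product, mem_agreeOutside, mem_univ, and_true] at hf ⊢
    intro i hi
    rcases eq_or_ne i v with rfl | hiv
    · exact update_self ..
    · rw [update_of_ne hiv]; exact hf i (by simp [hi, hiv])
  · rintro ⟨f, x⟩ hp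
    simp only [mem_product, mem_agreeOutside, mem_univ, and_true] at hp ⊢
    intro i hi
    rw [update_of_ne (by rintro rfl; simp at hi)]
    exact hp i (by simp_all)
  · intro f _
    simp
  · rintro ⟨f, x⟩ hp
    simp only [mem_product, mem_agreeOutside, mem_univ, and_true] at hp
    simp [← hp v hv]
  · intro f _
    simp

/-- Finner's inequality. -/
theorem sum_agreeOutside_prod_rpow_le {E : Type*} [Fintype E] (d : ι → X) {A : E → Finset ι}
    {ψ : E → ℝ} (hψ : ∀ e, 0 ≤ ψ e) (s : Finset ι) (hcov : ∀ v ∈ s, 1 ≤ ∑ e with v ∈ A e, ψ e)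
    {g : E → (ι → X) → ℝ} (hg : ∀ e f, 0 ≤ g e f) (hdep : ∀ e, DependsOn (g e) (A e : Set ι)) :
    ∑ f ∈ agreeOutside d s, ∏ e, g e f ^ ψ e ≤
      ∏ e, (∑ f ∈ agreeOutside d (s ∩ A e), g e f) ^ ψ e := by
  induction s using Finset.induction_on generalizing g with
  | empty => simp
  | insert v s hv ih =>
    set G : E → (ι → X) → ℝ := fun e f => if v ∈ A e then ∑ x, g e (update f v x) else g e f
    have hG : ∀ e f, 0 ≤ G e f := fun e f => by
      by_cases he : v ∈ A e
      · simpa [G, he] using sum_nonneg fun x _ => hg e (update f v x)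
      · simpa [G, he] using hg e f
    have hGdep : ∀ e, DependsOn (G e) (A e : Set ι) := fun e f f' hff' => by
      by_cases he : v ∈ A e
      · simp only [G, if_pos he]
        refine sum_congr rfl fun x _ => hdep e fun i hi => ?_
        rcases eq_or_ne i v with rfl | hiv
        · simp
        · simp [update_of_ne hiv, hff' i hi]
      · simpa [G, he] using hdep e hff'
    have hGsum : ∀ e, ∑ f ∈ agreeOutside d (s ∩ A e), G e f =
        ∑ f ∈ agreeOutside d (insert v s ∩ A e), g e f := fun e => by
      by_cases he : v ∈ A e
      · rw [insert_inter_of_mem he, sum_agreeOutside_insert fun h => hv (mem_inter.mp h).1]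
        simp [G, he]
      · rw [insert_inter_of_notMem he]
        simp [G, he]
    calc ∑ f ∈ agreeOutside d (insert v s), ∏ e, g e f ^ ψ e
        = ∑ f ∈ agreeOutside d s, ∑ x, ∏ e, g e (update f v x) ^ ψ e :=
          sum_agreeOutside_insert hv _
      _ ≤ ∑ f ∈ agreeOutside d s, ∏ e, G e f ^ ψ e := sum_le_sum fun f _ =>
          sum_update_prod_rpow_le hψ hg hdep (hcov v (mem_insert_self v s)) f
      _ ≤ ∏ e, (∑ f ∈ agreeOutside d (s ∩ A e), G e f) ^ ψ e :=
          ih (fun u hu => hcov u (mem_insert_of_mem hu)) hG hGdep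
      _ = ∏ e, (∑ f ∈ agreeOutside d (insert v s ∩ A e), g e f) ^ ψ e := by simp_rw [hGsum]

end Finner

theorem le_natCast_rpow_csInf {S : Set ℝ} (hne : S.Nonempty) (hbdd : BddBelow S) {c : ℝ} (n : ℕ)
    (h : ∀ x ∈ S, c ≤ (n : ℝ) ^ x) : c ≤ (n : ℝ) ^ sInf S := by
  rcases Nat.eq_zero_or_pos n with rfl | hn
  · by_cases hS : S ⊆ {0}
    · obtain rfl := hne.subset_singleton_iff.mp hS
      simpa using h 0 rfl
    · obtain ⟨x, hx, hx0⟩ := Set.not_subset.mp hS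
      calc c ≤ ((0 : ℕ) : ℝ) ^ x := h x hx
        _ = 0 := by simpa using zero_rpow hx0
        _ ≤ ((0 : ℕ) : ℝ) ^ sInf S := rpow_nonneg (Nat.cast_nonneg 0) _
  · have hclosed : IsClosed {x : ℝ | c ≤ (n : ℝ) ^ x} :=
      isClosed_le continuous_const <|
        continuous_const.rpow continuous_id fun _ => Or.inl (by positivity)
    exact hclosed.closure_subset_iff.mpr h (csInf_mem_closure hne hbdd)

namespace SimpleGraph
variable {V W : Type*} [Fintype V] [Fintype W]

theorem ncard_setOf_iso_le_card_hom (H : SimpleGraph V) (G : SimpleGraph W) :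
    {G' : G.Subgraph | Nonempty (G'.coe ≃g H)}.ncard ≤ Nat.card (H →g G) := by
  classical
  calc {G' : G.Subgraph | Nonempty (G'.coe ≃g H)}.ncard = G.copyCount H := by
        rw [copyCount, ← Set.ncard_coe_finset, coe_filter]
        exact congrArg _ <| Set.ext fun G' => by
          simpa using ⟨fun ⟨φ⟩ => ⟨φ.symm⟩, fun ⟨φ⟩ => ⟨φ.symm⟩⟩
    _ ≤ G.labelledCopyCount H := copyCount_le_labelledCopyCount
    _ ≤ Nat.card (H →g G) := by
        rw [labelledCopyCount, Fintype.card_eq_nat_card]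
        exact Nat.card_le_card_of_injective Copy.toHom fun f f' h =>
          Copy.ext fun v => DFunLike.congr_fun h v

variable [DecidableEq V]

structure IsFractionalEdgeCover (H : SimpleGraph V) (ψ : Sym2 V → ℝ) : Prop where
  nonneg : ∀ e, 0 ≤ ψ e
  eq_zero_of_notMem : ∀ e ∉ H.edgeSet, ψ e = 0
  one_le_sum : ∀ v, 1 ≤ ∑ e, if v ∈ e then ψ e else 0

theorem exists_isFractionalEdgeCover {H : SimpleGraph V} (hH : ∀ v, ∃ u, H.Adj v u) :
    ∃ ψ, H.IsFractionalEdgeCover ψ ∧ ∀ e, ψ e ≤ 1 := by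
  classical
  refine ⟨H.edgeSet.indicator 1, ⟨fun e => Set.indicator_nonneg (fun _ _ => zero_le_one) e,
    fun e he => Set.indicator_of_notMem he _, fun v => ?_⟩,
    fun e => Set.indicator_le_self' (fun _ _ => zero_le_one) e⟩
  obtain ⟨u, hvu⟩ := hH v
  calc (1 : ℝ) = if v ∈ s(v, u) then H.edgeSet.indicator 1 s(v, u) else 0 := by
        simp [Set.indicator_of_mem (show s(v, u) ∈ H.edgeSet from hvu)]
    _ ≤ _ := single_le_sum (f := fun e => if v ∈ e then H.edgeSet.indicator 1 e else 0)
        (fun e _ => by split_ifs <;> simp [Set.indicator_nonneg]) (mem_univ _)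

theorem le_natCast_rpow_fracEdgeCoverNum {H : SimpleGraph V} (hH : ∀ v, ∃ u, H.Adj v u)
    {c : ℝ} (n : ℕ) (h : ∀ ψ, H.IsFractionalEdgeCover ψ → c ≤ (n : ℝ) ^ ∑ e, ψ e) :
    c ≤ (n : ℝ) ^ fracEdgeCoverNum H := by
  obtain ⟨ψ, hψ, hψ1⟩ := exists_isFractionalEdgeCover hH
  refine le_natCast_rpow_csInf ?_ ⟨0, ?_⟩ n ?_
  · exact ⟨_, ψ, fun e => ⟨hψ.nonneg e, hψ1 e⟩, hψ.eq_zero_of_notMem, hψ.one_le_sum, rfl⟩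
  · rintro x ⟨ψ, hψ, -, -, rfl⟩
    exact sum_nonneg fun e _ => (hψ e).1
  · rintro x ⟨ψ, hψ, hψH, hψv, rfl⟩
    exact h ψ ⟨fun e => (hψ e).1, hψH, hψv⟩

theorem card_agreeOutside_filter_adj_le [DecidableEq W] (G : SimpleGraph W) [DecidableRel G.Adj]
    (d : V → W) (a b : V) :
    #{f ∈ agreeOutside d {a, b} | G.Adj (f a) (f b)} ≤ 2 * #G.edgeFinset := by
  rw [two_mul_card_edgeFinset]
  refine card_le_card_of_injOn (fun f => (f a, f b))
    (fun f hf => by simpa using (mem_filter.mp hf).2) ?_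
  intro f hf f' hf' hff'
  simp only [coe_filter, mem_agreeOutside, Prod.mk.injEq] at hf hf' hff'
  ext i
  by_cases hi : i ∈ ({a, b} : Finset V)
  · rcases mem_insert.mp hi with rfl | hi
    · exact hff'.1
    · rw [mem_singleton.mp hi]; exact hff'.2
  · rw [hf.1 i hi, hf'.1 i hi]

theorem card_hom_le_sum_prod_rpow (H : SimpleGraph V) (G : SimpleGraph W) {ψ : Sym2 V → ℝ}
    (hψ : H.IsFractionalEdgeCover ψ) [DecidablePred (· ∈ G.edgeSet)] :
    (Nat.card (H →g G) : ℝ) ≤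
      ∑ f : V → W, ∏ e, (if e.map f ∈ G.edgeSet then 1 else 0 : ℝ) ^ ψ e := by
  classical
  calc (Nat.card (H →g G) : ℝ)
      ≤ #{f : V → W | ∀ e ∈ H.edgeSet, e.map f ∈ G.edgeSet} := by
        rw [← Fintype.card_subtype, ← Nat.card_eq_fintype_card]
        exact_mod_cast Nat.card_le_card_of_injective
          (β := {f : V → W // ∀ e ∈ H.edgeSet, e.map f ∈ G.edgeSet})
          (fun φ : H →g G => ⟨φ, fun e => φ.map_mem_edgeSet⟩)
          fun φ φ' h => DFunLike.coe_injective (congrArg Subtype.val h)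
    _ = ∑ f : V → W, if ∀ e ∈ H.edgeSet, e.map f ∈ G.edgeSet then 1 else 0 := by
        rw [natCast_card_filter]
    _ ≤ _ := sum_le_sum fun f _ => by
        split_ifs with hf
        · refine (prod_eq_one fun e _ => ?_).ge
          by_cases he : e ∈ H.edgeSet
          · simp [hf e he]
          · simp [hψ.eq_zero_of_notMem e he]
        · exact prod_nonneg fun e _ => rpow_nonneg (by split_ifs <;> norm_num) _

theorem card_hom_le_rpow (H : SimpleGraph V) (G : SimpleGraph W) {ψ : Sym2 V → ℝ}
    (hψ : H.IsFractionalEdgeCover ψ) :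
    (Nat.card (H →g G) : ℝ) ≤ (2 * G.edgeSet.ncard : ℝ) ^ ∑ e, ψ e := by
  classical
  rcases isEmpty_or_nonempty (V → W) with hVW | hVW
  · have : IsEmpty (H →g G) := ⟨fun φ => hVW.elim φ⟩
    rw [Nat.card_of_isEmpty, Nat.cast_zero]
    positivity
  obtain ⟨d⟩ := hVW
  set g : Sym2 V → (V → W) → ℝ := fun e f => if e.map f ∈ G.edgeSet then 1 else 0
  have hg : ∀ e f, 0 ≤ g e f := fun e f => by simp only [g]; split_ifs <;> norm_num
  have hdep : ∀ e, DependsOn (g e) (e.toFinset : Set V) := fun e f f' hff' => by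
    simp only [g, Sym2.map_congr fun v hv => hff' v (by simpa using hv)]
  have hcov : ∀ v ∈ (univ : Finset V), 1 ≤ ∑ e with v ∈ e.toFinset, ψ e := fun v _ => by
    simpa [sum_filter] using hψ.one_le_sum v
  have hedge : ∀ e, ∑ f ∈ agreeOutside d e.toFinset, g e f ≤ 2 * G.edgeSet.ncard := by
    intro e
    induction e using Sym2.ind with | _ a b => ?_
    rw [← coe_edgeFinset, Set.ncard_coe_finset]
    simp only [g, sum_boole, Sym2.toFinset_mk_eq, Sym2.map_mk, mem_edgeSet]
    exact_mod_cast card_agreeOutside_filter_adj_le G d a b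
  calc (Nat.card (H →g G) : ℝ) ≤ ∑ f, ∏ e, g e f ^ ψ e := card_hom_le_sum_prod_rpow H G hψ
    _ ≤ ∏ e, (∑ f ∈ agreeOutside d e.toFinset, g e f) ^ ψ e := by
        simpa using sum_agreeOutside_prod_rpow_le d hψ.nonneg univ hcov hg hdep
    _ ≤ ∏ e : Sym2 V, (2 * G.edgeSet.ncard : ℝ) ^ ψ e :=
        prod_le_prod (fun e _ => rpow_nonneg (sum_nonneg fun f _ => hg e f) _) fun e _ =>
          rpow_le_rpow (sum_nonneg fun f _ => hg e f) (hedge e) (hψ.nonneg e)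
    _ = (2 * G.edgeSet.ncard : ℝ) ^ ∑ e, ψ e :=
        (rpow_sum_of_nonneg (by positivity) fun e _ => hψ.nonneg e).symm

end SimpleGraph

/-- AGM bound: the number of subgraphs of `G` isomorphic to `H` is at most
`(2m)^ρ(H)`, where `m` is the number of edges of `G` and `ρ` is the fractional
edge-cover number. -/
theorem stmt_7 {V W : Type*} [Fintype V] [DecidableEq V] [Fintype W]
    (H : SimpleGraph V) (G : SimpleGraph W)
    (hiso : ∀ v : V, ∃ u, H.Adj v u) (m : ℕ) (hm : m = G.edgeSet.ncard) :
    (Set.ncard {G' : G.Subgraph | Nonempty (G'.coe ≃g H)} : ℝ) ≤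
      (2 * m : ℝ) ^ (fracEdgeCoverNum H) := by
  have h := SimpleGraph.le_natCast_rpow_fracEdgeCoverNum hiso (2 * m) fun ψ hψ =>
    calc (Set.ncard {G' : G.Subgraph | Nonempty (G'.coe ≃g H)} : ℝ)
        ≤ Nat.card (H →g G) := mod_cast SimpleGraph.ncard_setOf_iso_le_card_hom H G
      _ ≤ _ := by push_cast; exact hm ▸ SimpleGraph.card_hom_le_rpow H G hψ
  exact_mod_cast h
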